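/- Tube-shift inclusion for the disturbance term: let Â_K ∈ ℝ^{n×n}, K ∈ ℝ^{m×n}, Δ_S ∈ ℝ^{n×(n+m)} with Δ_S ≥ 0, M_K = [Iₙ; K] (the (n+m)×n vertical stacking), Δ_K = Δ_S|M_K|, and w̄ ∈ ℝ^n with w̄ ≥ 0. Define F_0 = Δ_S, F_{j+1} = Δ_K Σ_{i=0}^j |Â_K^{j−i}| F_i, ℐ^Δ(j) = [± Σ_{i=0}^j |Â_K^{j−i}| F_i], and F^𝒲_0 = w̄, F^𝒲_{j+1} = Δ_K Σ_{i=0}^j |Â_K^{j−i}| F^𝒲_i, ℐ^𝒲(j) = [± Σ_{i=0}^j |Â_K^{j−i}| F^𝒲_i] (a set of vectors in ℝ^n). Then for every j ≥ 0 and every w ∈ [±w̄], one has {Â_K^j w} ⊕ Σ_{i=0}^{j−1} ℐ^Δ(j−i−1){M_K Â_K^i w} ⊆ ℐ^𝒲(j). -/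

import Mathlib

open Matrix Finset Pointwise

noncomputable section

/-- entrywise absolute value of a real matrix -/
def matAbs {ι κ : Type*} (M : Matrix ι κ ℝ) : Matrix ι κ ℝ := fun i j => |M i j|

/-- interval matrix `C ⊕ [±Δ] = {C + D : |D| ≤ Δ}` -/
def intervalMat {ι κ : Type*} (C Δ : Matrix ι κ ℝ) : Set (Matrix ι κ ℝ) :=
  {X | ∀ i j, |X i j - C i j| ≤ Δ i j}

/-- representation of a matrix zonotope: a center and a list of generators -/
structure ZRep (ι κ : Type*) where
  c : Matrix ι κ ℝ
  g : List (Matrix ι κ ℝ)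

/-- the set of matrices described by a matrix zonotope representation -/
def ZRep.set {ι κ : Type*} (Z : ZRep ι κ) : Set (Matrix ι κ ℝ) :=
  {X | ∃ β : Fin Z.g.length → ℝ, (∀ i, |β i| ≤ 1) ∧ X = Z.c + ∑ i, β i • Z.g.get i}

/-- interval hull `box(⟨M;G⟩) = M ⊕ [± Σ |G_i|]` of a matrix zonotope -/
def ZRep.box {ι κ : Type*} (Z : ZRep ι κ) : Set (Matrix ι κ ℝ) :=
  intervalMat Z.c ((Z.g.map matAbs).sum)

/-- the family `E(F)` of single-entry matrices, as a list -/
def EList {ι κ : Type*} [Fintype ι] [Fintype κ] [DecidableEq ι] [DecidableEq κ]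
    (F : Matrix ι κ ℝ) : List (Matrix ι κ ℝ) :=
  (Finset.univ : Finset (ι × κ)).toList.map fun p => Matrix.single p.1 p.2 (F p.1 p.2)

/-- the operator `𝕋_ℐ` (for `ℐ = C ⊕ [±Δ]`) acting on zonotope representations:
`𝕋_ℐ(⟨M;G₁,…,G_g⟩) = ⟨CM; CG₁,…,CG_g, E(Δ(|M|+Σ|G_i|))⟩` -/
def Tstep {ι κ μ : Type*} [Fintype ι] [Fintype κ] [Fintype μ] [DecidableEq ι] [DecidableEq μ]
    (C Δ : Matrix ι κ ℝ) (Z : ZRep κ μ) : ZRep ι μ :=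
  ⟨C * Z.c, Z.g.map (fun G => C * G) ++ EList (Δ * (matAbs Z.c + (Z.g.map matAbs).sum))⟩

/-- a vector of `ℝ^n` viewed as a column matrix -/
def colVec {n : ℕ} (w : Fin n → ℝ) : Matrix (Fin n) (Fin 1) ℝ := fun i _ => w i

/-- the set `𝒜_K = {Â_K + D[Iₙ; K] : |D| ≤ Δ_S}` -/
def AKset {n m : ℕ} (AhK : Matrix (Fin n) (Fin n) ℝ) (K : Matrix (Fin m) (Fin n) ℝ)
    (ΔS : Matrix (Fin n) (Fin n ⊕ Fin m) ℝ) : Set (Matrix (Fin n) (Fin n) ℝ) :=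
  {X | ∃ D ∈ intervalMat 0 ΔS, X = AhK + D * Matrix.fromRows 1 K}

/-- `ℐ^Δ(j) = [± Σ_{i=0}^{j} |Â_K^{j−i}| F_i]` -/
def IDelta {n m : ℕ} (AhK : Matrix (Fin n) (Fin n) ℝ)
    (FΔ : ℕ → Matrix (Fin n) (Fin n ⊕ Fin m) ℝ) (j : ℕ) :
    Set (Matrix (Fin n) (Fin n ⊕ Fin m) ℝ) :=
  intervalMat 0 (∑ i ∈ Finset.range (j + 1), matAbs (AhK ^ (j - i)) * FΔ i)

/-- `ℐ^𝒲(j) = [± Σ_{i=0}^{j} |Â_K^{j−i}| F^𝒲_i]`, a set of (column) vectors of `ℝ^n` -/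
def IWvec {n : ℕ} (AhK : Matrix (Fin n) (Fin n) ℝ)
    (FW : ℕ → Matrix (Fin n) (Fin 1) ℝ) (j : ℕ) : Set (Matrix (Fin n) (Fin 1) ℝ) :=
  intervalMat 0 (∑ i ∈ Finset.range (j + 1), matAbs (AhK ^ (j - i)) * FW i)

/-- the tube `ℬ(j) = Σ_{i<j} ℐ^Δ(j−i−1)[z(i); v(i)] ⊕ Σ_{i<j} ℐ^𝒲(i)` -/
def Btube {n m : ℕ} (AhK : Matrix (Fin n) (Fin n) ℝ)
    (FΔ : ℕ → Matrix (Fin n) (Fin n ⊕ Fin m) ℝ) (FW : ℕ → Matrix (Fin n) (Fin 1) ℝ)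
    (z : ℕ → Matrix (Fin n) (Fin 1) ℝ) (v : ℕ → Matrix (Fin m) (Fin 1) ℝ) (j : ℕ) :
    Set (Matrix (Fin n) (Fin 1) ℝ) :=
  (∑ i ∈ Finset.range j,
    (fun D => D * Matrix.fromRows (z i) (v i)) '' IDelta AhK FΔ (j - i - 1)) +
  ∑ i ∈ Finset.range j, IWvec AhK FW i

/-- feasibility of `(N, z(·), v(·))` at `x` for the variable-horizon robust control problem -/
def Feasible {n m : ℕ} (Ah : Matrix (Fin n) (Fin n) ℝ) (Bh : Matrix (Fin n) (Fin m) ℝ)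
    (K : Matrix (Fin m) (Fin n) ℝ)
    (FΔ : ℕ → Matrix (Fin n) (Fin n ⊕ Fin m) ℝ) (FW : ℕ → Matrix (Fin n) (Fin 1) ℝ)
    (X : Set (Matrix (Fin n) (Fin 1) ℝ)) (U : Set (Matrix (Fin m) (Fin 1) ℝ))
    (Xf : Set (Matrix (Fin n) (Fin 1) ℝ)) (x : Matrix (Fin n) (Fin 1) ℝ) (N : ℕ)
    (z : ℕ → Matrix (Fin n) (Fin 1) ℝ) (v : ℕ → Matrix (Fin m) (Fin 1) ℝ) : Prop :=
  1 ≤ N ∧ z 0 = x ∧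
  (∀ j < N, z (j + 1) = Ah * z j + Bh * v j) ∧
  (∀ j ≤ N, {z j} + Btube (Ah + Bh * K) FΔ FW z v j ⊆ X) ∧
  (∀ j < N, {v j} + (fun e => K * e) '' Btube (Ah + Bh * K) FΔ FW z v j ⊆ U) ∧
  {z N} + Btube (Ah + Bh * K) FΔ FW z v N ⊆ Xf

/-! Write `a k = |Â_K^k|` and let `S^Δ = a ⋆ F`, `S^𝒲 = a ⋆ F^𝒲` be the Cauchy products bounding
`ℐ^Δ` and `ℐ^𝒲`. In generating-function terms the recursions read
`S^Δ = a Δ_S + t (a Δ_K) ⋆ S^Δ` and `S^𝒲 = a w̄ + t (a Δ_K) ⋆ S^𝒲`. A fixed-point equation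
`X = b + t L ⋆ X` has at most one solution, and `a w̄ + t S^Δ |M_K| a w̄` solves the one for `S^𝒲`
(expand `S^Δ` once and use `Δ_K = Δ_S |M_K|`), so
`S^𝒲(j) = |Â_K^j| w̄ + Σ_{i<j} S^Δ(j-i-1) |M_K| |Â_K^i| w̄`.
The inclusion is then interval arithmetic: `|D u| ≤ Δ |u|` entrywise whenever `|D| ≤ Δ`, applied
to each summand of the Minkowski sum. -/

namespace MatrixSeq

variable {α : Type*} [NonUnitalSemiring α] {ι κ μ ν : Type*}

/-- `conv f g` and `convShift f g` are the coefficient sequences of `f(t) g(t)` and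
`t f(t) g(t)`. -/
def conv [Fintype κ] (f : ℕ → Matrix ι κ α) (g : ℕ → Matrix κ μ α) (j : ℕ) : Matrix ι μ α :=
  ∑ i ∈ range (j + 1), f (j - i) * g i

def convShift [Fintype κ] (f : ℕ → Matrix ι κ α) (g : ℕ → Matrix κ μ α) (j : ℕ) :
    Matrix ι μ α :=
  ∑ i ∈ range j, f (j - i - 1) * g i

theorem conv_eq_add_convShift [Fintype κ] (f : ℕ → Matrix ι κ α) (g : ℕ → Matrix κ μ α)
    (j : ℕ) : conv f g j = f j * g 0 + convShift f (fun i => g (i + 1)) j := by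
  rw [conv, sum_range_succ', add_comm, Nat.sub_zero]
  simp only [convShift, Nat.sub_sub]

theorem convShift_add_left [Fintype κ] (f f' : ℕ → Matrix ι κ α) (g : ℕ → Matrix κ μ α) :
    convShift (f + f') g = convShift f g + convShift f' g := by
  ext1 j
  simp only [convShift, Pi.add_apply, Matrix.add_mul, sum_add_distrib]

theorem convShift_add_right [Fintype κ] (f : ℕ → Matrix ι κ α) (g g' : ℕ → Matrix κ μ α) :
    convShift f (g + g') = convShift f g + convShift f g' := by
  ext1 j
  simp only [convShift, Pi.add_apply, Matrix.mul_add, sum_add_distrib]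

theorem convShift_assoc [Fintype κ] [Fintype μ] (f : ℕ → Matrix ι κ α)
    (g : ℕ → Matrix κ μ α) (h : ℕ → Matrix μ ν α) :
    convShift (convShift f g) h = convShift f (convShift g h) := by
  ext1 j
  simp only [convShift, Matrix.sum_mul, Matrix.mul_sum, Matrix.mul_assoc, sum_sigma']
  refine sum_nbij' (fun p => ⟨p.1 + p.2 + 1, p.1⟩) (fun p => ⟨p.2, p.1 - p.2 - 1⟩)
    ?_ ?_ ?_ ?_ ?_
    <;> simp only [mem_sigma, mem_range, Sigma.forall, Sigma.mk.injEq, heq_eq_eq, true_and,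
      and_true]
  all_goals rintro a b ⟨ha, hb⟩
  all_goals try omega
  rw [show j - (a + b + 1) - 1 = j - a - 1 - b - 1 by omega, show a + b + 1 - a - 1 = b by omega]

theorem eq_of_eq_add_convShift [Fintype ι] {L : ℕ → Matrix ι ι α} {b X Y : ℕ → Matrix ι μ α}
    (hX : ∀ j, X j = b j + convShift L X j) (hY : ∀ j, Y j = b j + convShift L Y j) :
    X = Y := by
  ext1 j
  induction j using Nat.strong_induction_on with
  | _ j ih =>
    rw [hX, hY, convShift, convShift]
    congr 1
    exact sum_congr rfl fun i hi => by rw [ih i (mem_range.mp hi)]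

theorem conv_eq_add_convShift_of_succ [Fintype ι] {a : ℕ → Matrix ι ι α} {D : Matrix ι ι α}
    {F : ℕ → Matrix ι κ α} (hF : ∀ j, F (j + 1) = D * conv a F j) :
    conv a F = (fun j => a j * F 0) + convShift (fun k => a k * D) (conv a F) := by
  ext1 j
  rw [conv_eq_add_convShift]
  simp only [Pi.add_apply, convShift, hF, Matrix.mul_assoc]

theorem conv_eq_add_convShift_conv [Fintype ι] [Fintype κ] {a : ℕ → Matrix ι ι α}
    {B : Matrix ι κ α} {M : Matrix κ ι α} {F : ℕ → Matrix ι κ α} {G : ℕ → Matrix ι μ α}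
    (hF0 : F 0 = B) (hF : ∀ j, F (j + 1) = (B * M) * conv a F j)
    (hG : ∀ j, G (j + 1) = (B * M) * conv a G j) :
    conv a G = (fun j => a j * G 0) + convShift (conv a F) (fun i => M * (a i * G 0)) := by
  set L := fun k => a k * (B * M)
  refine eq_of_eq_add_convShift (L := L) (fun j => congrFun (conv_eq_add_convShift_of_succ hG) j)
    fun j => ?_
  have hS := conv_eq_add_convShift_of_succ hF
  rw [hF0] at hS
  calc ((fun j => a j * G 0) + convShift (conv a F) (fun i => M * (a i * G 0))) j
      = a j * G 0 + (convShift (fun k => a k * B) (fun i => M * (a i * G 0)) j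
          + convShift L (convShift (conv a F) (fun i => M * (a i * G 0))) j) := by
        conv_lhs => rw [hS]
        rw [convShift_add_left, convShift_assoc]
        rfl
    _ = a j * G 0 + convShift L ((fun j => a j * G 0)
          + convShift (conv a F) (fun i => M * (a i * G 0))) j := by
        rw [convShift_add_right]
        simp only [Pi.add_apply, convShift, L, Matrix.mul_assoc]

end MatrixSeq

section IntervalArithmetic

variable {ι κ μ : Type*}

theorem mem_intervalMat_zero_iff {X Δ : Matrix ι κ ℝ} :
    X ∈ intervalMat 0 Δ ↔ ∀ i j, |X i j| ≤ Δ i j := by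
  simp only [intervalMat, Set.mem_ofPred_eq, Matrix.zero_apply, sub_zero]

theorem mem_intervalMat_zero_matAbs (X : Matrix ι κ ℝ) : X ∈ intervalMat 0 (matAbs X) :=
  mem_intervalMat_zero_iff.2 fun _ _ => le_rfl

theorem add_mem_intervalMat_zero {X Y Δ Γ : Matrix ι κ ℝ} (hX : X ∈ intervalMat 0 Δ)
    (hY : Y ∈ intervalMat 0 Γ) : X + Y ∈ intervalMat 0 (Δ + Γ) := by
  rw [mem_intervalMat_zero_iff] at *
  exact fun i j => (abs_add_le _ _).trans (add_le_add (hX i j) (hY i j))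

theorem mul_mem_intervalMat_zero [Fintype κ] {X Δ : Matrix ι κ ℝ} {Y Γ : Matrix κ μ ℝ}
    (hX : X ∈ intervalMat 0 Δ) (hY : Y ∈ intervalMat 0 Γ) : X * Y ∈ intervalMat 0 (Δ * Γ) := by
  rw [mem_intervalMat_zero_iff] at *
  intro i j
  refine (abs_sum_le_sum_abs _ _).trans (sum_le_sum fun k _ => ?_)
  rw [abs_mul]
  exact mul_le_mul (hX i k) (hY k j) (abs_nonneg _) ((abs_nonneg _).trans (hX i k))

theorem finsetSum_subset_intervalMat_zero {β : Type*} {s : Finset β}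
    {S : β → Set (Matrix ι κ ℝ)} {Δ : β → Matrix ι κ ℝ}
    (hS : ∀ b ∈ s, S b ⊆ intervalMat 0 (Δ b)) : ∑ b ∈ s, S b ⊆ intervalMat 0 (∑ b ∈ s, Δ b) := by
  intro x hx
  obtain ⟨X, hX, rfl⟩ := (Set.mem_finsetSum _ _ _).1 hx
  refine mem_intervalMat_zero_iff.2 fun i j => ?_
  rw [Matrix.sum_apply, Matrix.sum_apply]
  exact (abs_sum_le_sum_abs _ _).trans
    (sum_le_sum fun b hb => mem_intervalMat_zero_iff.1 (hS b hb (hX hb)) i j)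

end IntervalArithmetic

theorem stmt19_general {n m : ℕ} (AhK : Matrix (Fin n) (Fin n) ℝ) (K : Matrix (Fin m) (Fin n) ℝ)
    (ΔS : Matrix (Fin n) (Fin n ⊕ Fin m) ℝ)
    (wbar : Fin n → ℝ)
    (FΔ : ℕ → Matrix (Fin n) (Fin n ⊕ Fin m) ℝ) (hFΔ0 : FΔ 0 = ΔS)
    (hFΔ : ∀ j, FΔ (j + 1) =
      (ΔS * matAbs (Matrix.fromRows (1 : Matrix (Fin n) (Fin n) ℝ) K)) *
        ∑ i ∈ Finset.range (j + 1), matAbs (AhK ^ (j - i)) * FΔ i)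
    (FW : ℕ → Matrix (Fin n) (Fin 1) ℝ) (hFW0 : FW 0 = colVec wbar)
    (hFW : ∀ j, FW (j + 1) =
      (ΔS * matAbs (Matrix.fromRows (1 : Matrix (Fin n) (Fin n) ℝ) K)) *
        ∑ i ∈ Finset.range (j + 1), matAbs (AhK ^ (j - i)) * FW i) :
    ∀ j : ℕ, ∀ w ∈ intervalMat 0 (colVec wbar),
      {AhK ^ j * w} + ∑ i ∈ Finset.range j,
          (fun D => D * (Matrix.fromRows 1 K * (AhK ^ i * w))) ''
            IDelta AhK FΔ (j - i - 1) ⊆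
        IWvec AhK FW j := by
  intro j w hw
  have hpow : ∀ i, AhK ^ i * w ∈ intervalMat 0 (matAbs (AhK ^ i) * colVec wbar) := fun i =>
    mul_mem_intervalMat_zero (mem_intervalMat_zero_matAbs _) hw
  rintro _ ⟨_, rfl, z, hz, rfl⟩
  have hSW := congrFun
    (MatrixSeq.conv_eq_add_convShift_conv (a := fun k => matAbs (AhK ^ k)) hFΔ0 hFΔ hFW) j
  rw [hFW0] at hSW
  change _ ∈ intervalMat 0 (MatrixSeq.conv (fun k => matAbs (AhK ^ k)) FW j)
  rw [hSW, Pi.add_apply, MatrixSeq.convShift]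
  refine add_mem_intervalMat_zero (hpow j) (finsetSum_subset_intervalMat_zero (fun i _ => ?_) hz)
  rintro _ ⟨D, hD, rfl⟩
  exact mul_mem_intervalMat_zero hD
    (mul_mem_intervalMat_zero (mem_intervalMat_zero_matAbs _) (hpow i))

/-- tube-shift inclusion for the disturbance term:
`{Â_K^j w} ⊕ Σ_{i<j} ℐ^Δ(j−i−1){M_K Â_K^i w} ⊆ ℐ^𝒲(j)` for every `w ∈ [±w̄]`. -/
theorem stmt19 {n m : ℕ} (AhK : Matrix (Fin n) (Fin n) ℝ) (K : Matrix (Fin m) (Fin n) ℝ)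
    (ΔS : Matrix (Fin n) (Fin n ⊕ Fin m) ℝ) (hΔS : ∀ i j, 0 ≤ ΔS i j)
    (wbar : Fin n → ℝ) (hwbar : ∀ i, 0 ≤ wbar i)
    (FΔ : ℕ → Matrix (Fin n) (Fin n ⊕ Fin m) ℝ) (hFΔ0 : FΔ 0 = ΔS)
    (hFΔ : ∀ j, FΔ (j + 1) =
      (ΔS * matAbs (Matrix.fromRows (1 : Matrix (Fin n) (Fin n) ℝ) K)) *
        ∑ i ∈ Finset.range (j + 1), matAbs (AhK ^ (j - i)) * FΔ i)
    (FW : ℕ → Matrix (Fin n) (Fin 1) ℝ) (hFW0 : FW 0 = colVec wbar)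
    (hFW : ∀ j, FW (j + 1) =
      (ΔS * matAbs (Matrix.fromRows (1 : Matrix (Fin n) (Fin n) ℝ) K)) *
        ∑ i ∈ Finset.range (j + 1), matAbs (AhK ^ (j - i)) * FW i) :
    ∀ j : ℕ, ∀ w ∈ intervalMat 0 (colVec wbar),
      {AhK ^ j * w} + ∑ i ∈ Finset.range j,
          (fun D => D * (Matrix.fromRows 1 K * (AhK ^ i * w))) ''
            IDelta AhK FΔ (j - i - 1) ⊆
        IWvec AhK FW j :=
  stmt19_general AhK K ΔS wbar FΔ hFΔ0 hFΔ FW hFW0 hFW
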